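/- arXiv:2011.11107 — 5 statements merged into one kernel-verified Lean document; each statement's English description precedes it below -/
import Mathlib

section
/- Let B and A be directed algebras and Λ = 𝒜(B, A^op). Let i, j and ℓ be pairwise distinct vertices and k ≥ 1. Then the Yoneda multiplication m_2 : Ext^k_Λ(Δ_Λ(j), Δ_Λ(ℓ)) × Hom_Λ(Δ_Λ(i), Δ_Λ(j)) → Ext^k_Λ(Δ_Λ(i), Δ_Λ(ℓ)) is the zero map. -/
/-!
For `i ≠ j` every map `Δ(i) → Δ(j)` is right multiplication by an element of `e_i A^op e_j`:
since `Δ(j) = Λe_j / Λ(rad B)e_j` and `e_j B e_j = K e_j`, the corner `e_i Λ e_j` is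
`e_i A^op e_j` modulo `Λ(rad B)e_j`. Right multiplication by such an element is already defined
on `P(j) = Λe_j`, and it kills `Λ(rad B)e_i` because `(rad B)(rad A^op) = 0`; so the map factors
through the projective cover `P(j) → Δ(j)`. A map factoring through a projective lifts to a chain
map that is null-homotopic in positive degrees, and composing with a chain map of degree `k ≥ 1`
only sees those degrees, so the Yoneda product is null-homotopic.
-/

noncomputable section

universe u

/-- Data of a complete set of orthogonal idempotents indexed by the vertices `Fin n`
of a quiver, inside a `K`-algebra. -/
structure IdemData (K : Type u) [Field K] (n : ℕ) (B : Type u) [Ring B] [Algebra K B] where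
  e : Fin n → B
  orth : ∀ i j, e i * e j = if i = j then e i else 0
  complete : ∑ i, e i = 1

namespace IdemData

variable {K : Type u} [Field K] {n : ℕ} {B : Type u} [Ring B] [Algebra K B]

/-- Membership in the radical of a directed algebra: all "diagonal components" vanish.
For a directed (triangular, basic) algebra this is exactly the Jacobson radical. -/
def IsRad (d : IdemData K n B) (b : B) : Prop := ∀ i, d.e i * b * d.e i = 0

/-- A directed algebra: finite dimensional, basic, whose (Gabriel) quiver is acyclic with all
arrows `i ⟶ j` satisfying `i < j`.  Equivalently: `e j * B * e i = 0` for `j < i` and the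
"diagonal" components `e i * B * e i` are one-dimensional. -/
def Directed (d : IdemData K n B) : Prop :=
  FiniteDimensional K B ∧
  (∀ i j : Fin n, j < i → ∀ b : B, d.e j * b * d.e i = 0) ∧
  (∀ i : Fin n, ∀ b : B, ∃ c : K, d.e i * b * d.e i = c • d.e i)

/-- The opposite of a directed algebra (all arrows decrease); `A^op` for `A` directed. -/
def Codirected (d : IdemData K n B) : Prop :=
  FiniteDimensional K B ∧
  (∀ i j : Fin n, i < j → ∀ b : B, d.e j * b * d.e i = 0) ∧
  (∀ i : Fin n, ∀ b : B, ∃ c : K, d.e i * b * d.e i = c • d.e i)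

/-- The indecomposable projective left module `P(i) = B·e i`, realized as the left ideal
`{x | x * e i = x}`. -/
def proj (d : IdemData K n B) (i : Fin n) : Submodule B B where
  carrier := {x | x * d.e i = x}
  add_mem' := by
    intro a b ha hb
    simp only [Set.mem_setOf_eq] at *
    rw [add_mul, ha, hb]
  zero_mem' := by simp
  smul_mem' := by
    intro c x hx
    simp only [Set.mem_setOf_eq, smul_eq_mul] at *
    rw [mul_assoc, hx]

end IdemData

/-- The bilinear "multiplication" map `C ⊗ B → Λ`, `(c, b) ↦ ιC c * ιB b`. -/
def dualBil {K : Type u} [Field K] {B C L : Type u} [Ring B] [Algebra K B] [Ring C] [Algebra K C]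
    [Ring L] [Algebra K L] (ιB : B →ₐ[K] L) (ιC : C →ₐ[K] L) : C →ₗ[K] B →ₗ[K] L :=
  LinearMap.mk₂ K (fun c b => ιC c * ιB b)
    (fun c c' b => by simp only [map_add, add_mul])
    (fun k c b => by simp only [map_smul, smul_mul_assoc])
    (fun c b b' => by simp only [map_add, mul_add])
    (fun k c b => by simp only [map_smul, mul_smul_comm])

/-- `Λ` is the dual extension algebra `𝒜(B, C)` of `B` and `C` (in the paper `C = A^op`):
`B` and `C` embed as subalgebras, sharing the idempotents; the product of a radical element of
`B` with a radical element of `C` (in this order; i.e. all paths `α β'`) vanishes; and the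
products `ιC c * ιB b` span `Λ`, the only linear relations among them being the ones forced by
`ιC (c e_i) * ιB (e_j b) = 0` for `i ≠ j`.  This encodes `Λ ≅ ⊕_i C e_i ⊗ e_i B` as in
`Definition 2.1` of the paper. -/
structure DualExt (K : Type u) [Field K] (n : ℕ) (B C L : Type u) [Ring B] [Algebra K B]
    [Ring C] [Algebra K C] [Ring L] [Algebra K L]
    (dB : IdemData K n B) (dC : IdemData K n C) where
  ιB : B →ₐ[K] L
  ιC : C →ₐ[K] L
  injB : Function.Injective ιB
  injC : Function.Injective ιC
  idem : ∀ i, ιB (dB.e i) = ιC (dC.e i)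
  radMul : ∀ b c, dB.IsRad b → dC.IsRad c → ιB b * ιC c = 0
  spans : Submodule.span K {x : L | ∃ c b, x = ιC c * ιB b} = ⊤
  mulKer : LinearMap.ker (TensorProduct.lift (dualBil ιB ιC)) =
    Submodule.span K {x : TensorProduct K C B |
      ∃ i j : Fin n, i ≠ j ∧ ∃ c b, x = (c * dC.e i) ⊗ₜ[K] (dB.e j * b)}

/-- The left ideal `{x | x * a = x}`; for an idempotent `a = e i` this is the
indecomposable projective module `P(i) = B e i`. -/
def leftIdeal {L : Type u} [Ring L] (a : L) : Submodule L L where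
  carrier := {x | x * a = x}
  add_mem' := by
    intro x y hx hy
    simp only [Set.mem_setOf_eq] at *
    rw [add_mul, hx, hy]
  zero_mem' := by simp
  smul_mem' := by
    intro c x hx
    simp only [Set.mem_setOf_eq, smul_eq_mul] at *
    rw [mul_assoc, hx]
/-- A projective resolution `⋯ → P 1 → P 0 → M → 0` of the module `M` over `R`. -/
structure ProjRes (K : Type u) [Field K] (R : Type u) [Ring R] [Algebra K R]
    (M : Type u) [AddCommGroup M] [Module R M] where
  P : ℕ → Type u
  [acg : ∀ k, AddCommGroup (P k)]
  [mod : ∀ k, Module R (P k)]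
  d : ∀ k, P (k + 1) →ₗ[R] P k
  aug : P 0 →ₗ[R] M
  proj : ∀ k, Module.Projective R (P k)
  aug_surj : Function.Surjective aug
  exact0 : LinearMap.ker aug = LinearMap.range (d 0)
  exact : ∀ k, LinearMap.ker (d k) = LinearMap.range (d (k + 1))

attribute [instance] ProjRes.acg ProjRes.mod

/-- Minimality of a projective resolution: the differentials are radical maps,
`im (d k) ⊆ rad R · P k` (the radical being described by the idempotent data). -/
def ProjRes.Minimal {K : Type u} [Field K] {R : Type u} [Ring R] [Algebra K R]
    {M : Type u} [AddCommGroup M] [Module R M] {n : ℕ}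
    (dd : IdemData K n R) (Q : ProjRes K R M) : Prop :=
  ∀ k, LinearMap.range (Q.d k) ≤
    Submodule.span R {x : Q.P k | ∃ b m, dd.IsRad b ∧ x = b • m}

/-- `S` is (a copy of) the simple module `L(i)` at the vertex `i`: it is simple and the
idempotent `e i` acts as the identity on it. -/
def IdemData.IsSimpleAt {K : Type u} [Field K] {n : ℕ} {B : Type u} [Ring B] [Algebra K B]
    (d : IdemData K n B) (i : Fin n) (S : Type u) [AddCommGroup S] [Module B S] : Prop :=
  IsSimpleModule B S ∧ ∀ s : S, d.e i • s = s

/-- The standard module `Δ_Λ(i) = Λe_i / Λ·(rad B)·e_i` of the dual extension algebra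
(the quotient of the indecomposable projective `P_Λ(i)` by the span of the images of all
maps from `P_Λ(j)`, `j > i`, equivalently by `Λ·(rad B)·e i`). -/
def DualExt.std {K : Type u} [Field K] {n : ℕ} {B C L : Type u} [Ring B] [Algebra K B]
    [Ring C] [Algebra K C] [Ring L] [Algebra K L] {dB : IdemData K n B} {dC : IdemData K n C}
    (D : DualExt K n B C L dB dC) (i : Fin n) : Type u :=
  ↥(leftIdeal (D.ιB (dB.e i))) ⧸
    ((Submodule.span L {x : L | ∃ b, dB.IsRad b ∧ x = D.ιB b * D.ιB (dB.e i)}).comap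
      (leftIdeal (D.ιB (dB.e i))).subtype)

noncomputable instance {K : Type u} [Field K] {n : ℕ} {B C L : Type u} [Ring B] [Algebra K B]
    [Ring C] [Algebra K C] [Ring L] [Algebra K L] {dB : IdemData K n B} {dC : IdemData K n C}
    (D : DualExt K n B C L dB dC) (i : Fin n) : AddCommGroup (D.std i) :=
  by unfold DualExt.std; infer_instance

noncomputable instance {K : Type u} [Field K] {n : ℕ} {B C L : Type u} [Ring B] [Algebra K B]
    [Ring C] [Algebra K C] [Ring L] [Algebra K L] {dB : IdemData K n B} {dC : IdemData K n C}
    (D : DualExt K n B C L dB dC) (i : Fin n) : Module L (D.std i) :=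
  by unfold DualExt.std; infer_instance

section stdInstances

variable {K : Type u} [Field K] {n : ℕ} {B C L : Type u} [Ring B] [Algebra K B]
  [Ring C] [Algebra K C] [Ring L] [Algebra K L] {dB : IdemData K n B} {dC : IdemData K n C}

noncomputable instance (D : DualExt K n B C L dB dC) (i : Fin n) : Module K (D.std i) :=
  Module.compHom _ (algebraMap K L)

instance (D : DualExt K n B C L dB dC) (i : Fin n) : SMulCommClass L K (D.std i) := by
  constructor
  intro l k x
  show l • (algebraMap K L k • x) = algebraMap K L k • (l • x)
  rw [← mul_smul, ← mul_smul, Algebra.commutes]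

instance (D : DualExt K n B C L dB dC) (i : Fin n) : IsScalarTower K L (D.std i) := by
  constructor
  intro k l x
  show (k • l) • x = algebraMap K L k • l • x
  rw [← mul_smul, Algebra.smul_def]

end stdInstances

namespace IdemData

variable {K : Type u} [Field K] {n : ℕ} {B : Type u} [Ring B] [Algebra K B] (d : IdemData K n B)

theorem e_mul_self (i : Fin n) : d.e i * d.e i = d.e i := by
  simpa using d.orth i i

theorem e_mul_e_of_ne {i j : Fin n} (hij : i ≠ j) : d.e i * d.e j = 0 := by
  simpa [hij] using d.orth i j

theorem isRad_e_mul_mul_e {a b : Fin n} (hab : a ≠ b) (x : B) : d.IsRad (d.e a * x * d.e b) := by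
  intro m
  rcases eq_or_ne m a with rfl | hma
  · simp [mul_assoc, d.e_mul_e_of_ne hab.symm]
  · simp [← mul_assoc, d.e_mul_e_of_ne hma]

theorem isRad_mul_e {b : B} (hb : d.IsRad b) (a : Fin n) : d.IsRad (b * d.e a) := by
  intro m
  rcases eq_or_ne a m with rfl | ham
  · rw [← mul_assoc, mul_assoc _ (d.e a) (d.e a), d.e_mul_self, hb]
  · simp [mul_assoc, d.e_mul_e_of_ne ham]

theorem isRad_one_sub_e_mul_mul_e (b : B) (j : Fin n) : d.IsRad ((1 - d.e j) * b * d.e j) := by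
  intro m
  rcases eq_or_ne m j with rfl | hmj
  · simp [← mul_assoc, mul_sub, d.e_mul_self]
  · simp [mul_assoc, d.e_mul_e_of_ne hmj.symm]

end IdemData

section LeftIdeal

variable {L : Type u} [Ring L] {a : L}

theorem leftIdeal_hom_ext (ha : a * a = a) {M : Type u} [AddCommGroup M] [Module L M]
    {f g : leftIdeal a →ₗ[L] M} (h : f ⟨a, ha⟩ = g ⟨a, ha⟩) : f = g := by
  ext x
  have hx : x = (x : L) • (⟨a, ha⟩ : leftIdeal a) := Subtype.ext x.2.symm
  rw [hx, map_smul, map_smul, h]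

theorem projective_leftIdeal (ha : a * a = a) : Module.Projective L (leftIdeal a) :=
  Module.Projective.of_split (leftIdeal a).subtype
    ((LinearMap.mulRight L a).codRestrict (leftIdeal a) fun x => by
      show x * a * a = x * a
      rw [mul_assoc, ha])
    (LinearMap.ext fun x => Subtype.ext x.2)

end LeftIdeal

theorem LinearMap.exists_comp_eq_of_range_le {R : Type u} [Ring R] {P M N : Type u}
    [AddCommGroup P] [Module R P] [AddCommGroup M] [Module R M] [AddCommGroup N] [Module R N]
    [Module.Projective R P] (φ : P →ₗ[R] M) (ψ : N →ₗ[R] M)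
    (hle : LinearMap.range φ ≤ LinearMap.range ψ) :
    ∃ χ : P →ₗ[R] N, ψ.comp χ = φ := by
  obtain ⟨χ, hχ⟩ := Module.projective_lifting_property ψ.rangeRestrict
    (φ.codRestrict (LinearMap.range ψ) fun x => hle ⟨x, rfl⟩)
    (LinearMap.surjective_rangeRestrict ψ)
  exact ⟨χ, LinearMap.ext fun x => congrArg Subtype.val (LinearMap.congr_fun hχ x)⟩

theorem LinearMap.comp_eq_add_of_homotopy {R : Type u} [Ring R]
    {P₀ P₁ Q₁ Q₂ X Y : Type u} [AddCommGroup P₀] [Module R P₀] [AddCommGroup P₁] [Module R P₁]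
    [AddCommGroup Q₁] [Module R Q₁] [AddCommGroup Q₂] [Module R Q₂]
    [AddCommGroup X] [Module R X] [AddCommGroup Y] [Module R Y]
    {g : P₁ →ₗ[R] Q₁} {dQ : Q₂ →ₗ[R] Q₁} {h : P₁ →ₗ[R] Q₂} {h' : P₀ →ₗ[R] Q₁}
    {dP : P₁ →ₗ[R] P₀} {ε : Q₁ →ₗ[R] X} {ε' : Q₂ →ₗ[R] Y} {dY : Y →ₗ[R] X}
    (hg : g = dQ.comp h + h'.comp dP) (hε : ε.comp dQ = dY.comp ε') :
    ε.comp g = dY.comp (ε'.comp h) + (ε.comp h').comp dP := by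
  rw [hg, LinearMap.comp_add, ← LinearMap.comp_assoc, hε, LinearMap.comp_assoc,
    LinearMap.comp_assoc]

namespace ProjRes

variable {K : Type u} [Field K] {R : Type u} [Ring R] [Algebra K R]
  {M N : Type u} [AddCommGroup M] [Module R M] [AddCommGroup N] [Module R N]

attribute [instance] ProjRes.proj

theorem d_comp_d (Q : ProjRes K R M) (t : ℕ) : (Q.d t).comp (Q.d (t + 1)) = 0 := by
  ext x
  have hx : Q.d (t + 1) x ∈ LinearMap.ker (Q.d t) := Q.exact t ▸ ⟨x, rfl⟩
  exact hx

theorem aug_comp_d_zero (Q : ProjRes K R M) : Q.aug.comp (Q.d 0) = 0 := by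
  ext x
  have hx : Q.d 0 x ∈ LinearMap.ker Q.aug := Q.exact0 ▸ ⟨x, rfl⟩
  exact hx

variable (Q : ProjRes K R M) (Q' : ProjRes K R N) (G : ∀ t, Q.P t →ₗ[R] Q'.P t)

theorem exists_homotopy_succ
    (hG : ∀ t, (G t).comp (Q.d t) = (Q'.d t).comp (G (t + 1)))
    {t : ℕ} (h : Q.P t →ₗ[R] Q'.P (t + 1))
    (hh : ((Q'.d t).comp h).comp (Q.d t) = (G t).comp (Q.d t)) :
    ∃ h' : Q.P (t + 1) →ₗ[R] Q'.P (t + 2),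
      (Q'.d (t + 1)).comp h' = G (t + 1) - h.comp (Q.d t) := by
  apply LinearMap.exists_comp_eq_of_range_le
  rw [← Q'.exact t]
  rintro _ ⟨x, rfl⟩
  have e1 := LinearMap.congr_fun (hG t) x
  have e2 := LinearMap.congr_fun hh x
  simp only [LinearMap.comp_apply] at e1 e2
  simp only [LinearMap.mem_ker, LinearMap.sub_apply, LinearMap.comp_apply, map_sub, e2, e1,
    sub_self]

theorem exists_nullHomotopy (hG₀ : Q'.aug.comp (G 0) = 0)
    (hG : ∀ t, (G t).comp (Q.d t) = (Q'.d t).comp (G (t + 1))) :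
    ∃ h : ∀ t, Q.P t →ₗ[R] Q'.P (t + 1),
      (Q'.d 0).comp (h 0) = G 0 ∧
      ∀ t, (Q'.d (t + 1)).comp (h (t + 1)) = G (t + 1) - (h t).comp (Q.d t) := by
  obtain ⟨h₀, hh₀⟩ : ∃ h₀ : Q.P 0 →ₗ[R] Q'.P 1, (Q'.d 0).comp h₀ = G 0 := by
    apply LinearMap.exists_comp_eq_of_range_le
    rw [← Q'.exact0]
    rintro _ ⟨x, rfl⟩
    exact LinearMap.congr_fun hG₀ x
  choose step hstep using fun t => Q.exists_homotopy_succ Q' G hG (t := t)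
  have hstep_comp : ∀ t h hh, ((Q'.d (t + 1)).comp (step t h hh)).comp (Q.d (t + 1)) =
      (G (t + 1)).comp (Q.d (t + 1)) := fun t h hh => by
    rw [hstep, LinearMap.sub_comp, LinearMap.comp_assoc, d_comp_d, LinearMap.comp_zero, sub_zero]
  let F : ∀ t, Σ' h : Q.P t →ₗ[R] Q'.P (t + 1),
      ((Q'.d t).comp h).comp (Q.d t) = (G t).comp (Q.d t) :=
    fun t => Nat.rec ⟨h₀, by rw [hh₀]⟩
      (fun t p => ⟨step t p.1 p.2, hstep_comp t p.1 p.2⟩) t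
  exact ⟨fun t => (F t).1, hh₀, fun t => hstep t (F t).1 (F t).2⟩

theorem exists_homotopy_of_factors_aug {f : M →ₗ[R] N}
    (hG₀ : Q'.aug.comp (G 0) = f.comp Q.aug)
    (hG : ∀ t, (G t).comp (Q.d t) = (Q'.d t).comp (G (t + 1)))
    {v : M →ₗ[R] Q'.P 0} (hv : Q'.aug.comp v = f) :
    ∃ h : ∀ t, Q.P t →ₗ[R] Q'.P (t + 1),
      ∀ t, G (t + 1) = (Q'.d (t + 1)).comp (h (t + 1)) + (h t).comp (Q.d t) := by
  -- `G` and `G'` agree in positive degrees, and `G'` lies over `0`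
  let G' : ∀ t, Q.P t →ₗ[R] Q'.P t := fun t => Nat.casesOn t (G 0 - v.comp Q.aug) (G ·.succ)
  have hG'₀ : Q'.aug.comp (G' 0) = 0 := by
    change Q'.aug.comp (G 0 - v.comp Q.aug) = 0
    rw [LinearMap.comp_sub, hG₀, ← LinearMap.comp_assoc, hv, sub_self]
  have hG' : ∀ t, (G' t).comp (Q.d t) = (Q'.d t).comp (G' (t + 1))
    | 0 => by
      rw [← hG 0]
      change (G 0 - v.comp Q.aug).comp (Q.d 0) = _
      rw [LinearMap.sub_comp, LinearMap.comp_assoc, aug_comp_d_zero, LinearMap.comp_zero,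
        sub_zero]
    | t + 1 => hG (t + 1)
  obtain ⟨h, -, hh⟩ := Q.exists_nullHomotopy Q' G' hG'₀ hG'
  exact ⟨h, fun t => (eq_sub_iff_add_eq.mp (hh t)).symm⟩

end ProjRes

namespace DualExt

variable {K : Type u} [Field K] {n : ℕ} {B C L : Type u} [Ring B] [Algebra K B]
  [Ring C] [Algebra K C] [Ring L] [Algebra K L] {dB : IdemData K n B} {dC : IdemData K n C}
  (D : DualExt K n B C L dB dC)

def stdKer (j : Fin n) : Submodule L L :=
  Submodule.span L {x : L | ∃ b, dB.IsRad b ∧ x = D.ιB b * D.ιB (dB.e j)}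

def stdMk (j : Fin n) : leftIdeal (D.ιB (dB.e j)) →ₗ[L] D.std j :=
  Submodule.mkQ _

theorem ιB_e_mul_self (i : Fin n) : D.ιB (dB.e i) * D.ιB (dB.e i) = D.ιB (dB.e i) := by
  rw [← map_mul, dB.e_mul_self]

theorem ιB_mem_stdKer {b : B} (hb : dB.IsRad b) (j : Fin n) : D.ιB (b * dB.e j) ∈ D.stdKer j := by
  rw [map_mul]
  exact Submodule.subset_span ⟨b, hb, rfl⟩

theorem std_hom_ext {i : Fin n} {M : Type u} [AddCommGroup M] [Module L M]
    {f g : D.std i →ₗ[L] M}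
    (h : f (D.stdMk i ⟨_, D.ιB_e_mul_self i⟩) = g (D.stdMk i ⟨_, D.ιB_e_mul_self i⟩)) : f = g :=
  Submodule.linearMap_qext _ (leftIdeal_hom_ext (D.ιB_e_mul_self i) h)

/-- On a spanning product `c b`, split `b e_j = e_j b e_j + (1 - e_j) b e_j`: the first summand
is a scalar multiple of `e_j`, the second lies in `rad B`. -/
theorem corner_mem_stdKer_sup {j : Fin n}
    (hdiag : ∀ b : B, ∃ κ : K, dB.e j * b * dB.e j = κ • dB.e j) (i : Fin n) (x : L) :
    D.ιB (dB.e i) * x * D.ιB (dB.e j) ∈ (D.stdKer j).restrictScalars K ⊔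
      LinearMap.range (D.ιC.toLinearMap ∘ₗ LinearMap.mulLeftRight K (dC.e i, dC.e j)) := by
  have hx : x ∈ Submodule.span K {y : L | ∃ c b, y = D.ιC c * D.ιB b} := D.spans ▸ trivial
  suffices Submodule.span K {y : L | ∃ c b, y = D.ιC c * D.ιB b} ≤ Submodule.comap
      (LinearMap.mulLeftRight K (D.ιB (dB.e i), D.ιB (dB.e j))) ((D.stdKer j).restrictScalars K ⊔
        LinearMap.range (D.ιC.toLinearMap ∘ₗ LinearMap.mulLeftRight K (dC.e i, dC.e j))) from
    this hx
  rw [Submodule.span_le]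
  rintro _ ⟨c, b, rfl⟩
  obtain ⟨κ, hκ⟩ := hdiag b
  have hsplit : b * dB.e j = dB.e j * b * dB.e j + (1 - dB.e j) * b * dB.e j := by noncomm_ring
  have hcorner : D.ιB (dB.e i) * (D.ιC c * D.ιB b) * D.ιB (dB.e j) =
      D.ιC (dC.e i * c) * D.ιB (b * dB.e j) := by
    rw [D.idem i, map_mul, map_mul]
    simp only [mul_assoc]
  have hdiagonal : D.ιC (dC.e i * c) * D.ιB (dB.e j * b * dB.e j) =
      D.ιC (dC.e i * (κ • c) * dC.e j) := by
    rw [hκ, map_smul, D.idem j, mul_smul_comm, ← map_mul, mul_smul_comm, smul_mul_assoc,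
      map_smul]
  have hexpand : D.ιB (dB.e i) * (D.ιC c * D.ιB b) * D.ιB (dB.e j) =
      D.ιC (dC.e i * (κ • c) * dC.e j) +
        D.ιC (dC.e i * c) * D.ιB ((1 - dB.e j) * b * dB.e j) := by
    rw [hcorner, hsplit, map_add, mul_add, hdiagonal]
  simp only [SetLike.mem_coe, Submodule.mem_comap, LinearMap.mulLeftRight_apply, hexpand]
  refine add_mem (Submodule.mem_sup_right ⟨κ • c, rfl⟩) (Submodule.mem_sup_left ?_)
  have hr : D.ιB ((1 - dB.e j) * b * dB.e j) ∈ D.stdKer j := by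
    simpa [mul_assoc, dB.e_mul_self] using
      D.ιB_mem_stdKer (dB.isRad_one_sub_e_mul_mul_e b j) j
  exact (D.stdKer j).smul_mem _ hr

theorem ιB_e_mul_ιC_corner (i j : Fin n) (c : C) :
    D.ιB (dB.e i) * D.ιC (dC.e i * c * dC.e j) = D.ιC (dC.e i * c * dC.e j) := by
  rw [D.idem i, ← map_mul, ← mul_assoc, ← mul_assoc, dC.e_mul_self]

theorem ιC_corner_mul_ιB_e (i j : Fin n) (c : C) :
    D.ιC (dC.e i * c * dC.e j) * D.ιB (dB.e j) = D.ιC (dC.e i * c * dC.e j) := by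
  rw [D.idem j, ← map_mul, mul_assoc, dC.e_mul_self]

def mulCorner (i j : Fin n) (c : C) :
    leftIdeal (D.ιB (dB.e i)) →ₗ[L] leftIdeal (D.ιB (dB.e j)) :=
  ((LinearMap.mulRight L (D.ιC (dC.e i * c * dC.e j))).comp (leftIdeal _).subtype).codRestrict
    (leftIdeal _) fun x => by
      show (x : L) * D.ιC (dC.e i * c * dC.e j) * D.ιB (dB.e j) =
        (x : L) * D.ιC (dC.e i * c * dC.e j)
      rw [mul_assoc, D.ιC_corner_mul_ιB_e]

/-- For `i ≠ j` the element `e_i c e_j` lies in `rad C`, which `rad B` annihilates. -/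
theorem stdKer_comap_le_ker_mulCorner {i j : Fin n} (hij : i ≠ j) (c : C) :
    (D.stdKer i).comap (leftIdeal (D.ιB (dB.e i))).subtype ≤
      LinearMap.ker (D.mulCorner i j c) := by
  have hkill : D.stdKer i ≤
      LinearMap.ker (LinearMap.mulRight L (D.ιC (dC.e i * c * dC.e j))) := by
    rw [stdKer, Submodule.span_le]
    rintro _ ⟨b, hb, rfl⟩
    rw [SetLike.mem_coe, LinearMap.mem_ker, LinearMap.mulRight_apply, ← map_mul,
      D.radMul _ _ (dB.isRad_mul_e hb i) (dC.isRad_e_mul_mul_e hij c)]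
  exact fun x hx => Subtype.ext (hkill hx)

def stdMulCorner {i j : Fin n} (hij : i ≠ j) (c : C) :
    D.std i →ₗ[L] leftIdeal (D.ιB (dB.e j)) :=
  Submodule.liftQ _ (D.mulCorner i j c) (D.stdKer_comap_le_ker_mulCorner hij c)

theorem exists_stdMk_comp_stdMulCorner_eq {i j : Fin n} (hij : i ≠ j)
    (hdiag : ∀ b : B, ∃ κ : K, dB.e j * b * dB.e j = κ • dB.e j) (f : D.std i →ₗ[L] D.std j) :
    ∃ c : C, (D.stdMk j).comp (D.stdMulCorner hij c) = f := by
  set gen : leftIdeal (D.ιB (dB.e i)) := ⟨_, D.ιB_e_mul_self i⟩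
  obtain ⟨z, hz⟩ := Submodule.mkQ_surjective _ (f (D.stdMk i gen))
  obtain ⟨y, hy, _, ⟨c, rfl⟩, hyc⟩ := Submodule.mem_sup.mp (D.corner_mem_stdKer_sup hdiag i z)
  replace hyc : y + D.ιC (dC.e i * c * dC.e j) = D.ιB (dB.e i) * z * D.ιB (dB.e j) := hyc
  refine ⟨c, D.std_hom_ext ?_⟩
  have hgen : D.ιB (dB.e i) • gen = gen := Subtype.ext (D.ιB_e_mul_self i)
  have hval : ((D.mulCorner i j c gen - D.ιB (dB.e i) • z : leftIdeal _) : L) = -y := by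
    have hz' : D.ιB (dB.e i) * z = D.ιB (dB.e i) * z * D.ιB (dB.e j) := by rw [mul_assoc, z.2]
    show D.ιB (dB.e i) * _ - D.ιB (dB.e i) * z = -y
    rw [D.ιB_e_mul_ιC_corner, hz', ← hyc]
    abel
  calc D.stdMk j (D.stdMulCorner hij c (D.stdMk i gen))
      = D.stdMk j (D.mulCorner i j c gen) := rfl
    _ = D.stdMk j (D.ιB (dB.e i) • z) := by
        refine (Submodule.Quotient.eq _).mpr ?_
        rw [Submodule.mem_comap, Submodule.subtype_apply, hval]
        exact (D.stdKer j).neg_mem hy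
    _ = D.ιB (dB.e i) • f (D.stdMk i gen) := by rw [map_smul, ← hz]; rfl
    _ = f (D.stdMk i gen) := by rw [← map_smul, ← map_smul, hgen]

theorem exists_aug_comp_eq {i j : Fin n} (hij : i ≠ j)
    (hdiag : ∀ b : B, ∃ κ : K, dB.e j * b * dB.e j = κ • dB.e j)
    (Q : ProjRes K L (D.std j)) (f : D.std i →ₗ[L] D.std j) :
    ∃ v : D.std i →ₗ[L] Q.P 0, Q.aug.comp v = f := by
  obtain ⟨c, hc⟩ := D.exists_stdMk_comp_stdMulCorner_eq hij hdiag f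
  have := projective_leftIdeal (D.ιB_e_mul_self j)
  obtain ⟨ψ, hψ⟩ := Module.projective_lifting_property Q.aug (D.stdMk j) Q.aug_surj
  exact ⟨ψ.comp (D.stdMulCorner hij c), by rw [← LinearMap.comp_assoc, hψ, hc]⟩

end DualExt

theorem statement2_general
    (K : Type) [Field K] (n : ℕ)
    (B C L : Type) [Ring B] [Algebra K B] [Ring C] [Algebra K C] [Ring L] [Algebra K L]
    (dB : IdemData K n B) (dC : IdemData K n C)
    (hB : dB.Directed)
    (D : DualExt K n B C L dB dC)
    (i j l : Fin n) (hij : i ≠ j)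
    (k' : ℕ)
    -- minimal projective resolutions of `Δ_Λ(i)`, `Δ_Λ(j)`, `Δ_Λ(ℓ)`
    (Ri : ProjRes K L (D.std i))
    (Rj : ProjRes K L (D.std j))
    (Rl : ProjRes K L (D.std l))
    -- a homomorphism `f' : Δ_Λ(i) → Δ_Λ(j)` together with a chain-map lift `g`
    (f' : D.std i →ₗ[L] D.std j)
    (g : ∀ t, Ri.P t →ₗ[L] Rj.P t)
    (hg_aug : Rj.aug.comp (g 0) = f'.comp Ri.aug)
    (hg_chain : ∀ t, (g t).comp (Ri.d t) = (Rj.d t).comp (g (t + 1)))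
    -- a degree-`k = k' + 1` chain map `ε` representing a class of `Ext^k(Δ_Λ(j), Δ_Λ(ℓ))`
    (ε : ∀ t, Rj.P (k' + 1 + t) →ₗ[L] Rl.P t)
    (hε_chain : ∀ t, (ε t).comp (Rj.d (k' + 1 + t)) = (Rl.d t).comp (ε (t + 1))) :
    -- the Yoneda product `[ε] ⋆ [f']` is zero: the composite chain map is null-homotopic
    ∃ (s : ∀ t, Ri.P (k' + 1 + t) →ₗ[L] Rl.P (t + 1)) (s' : Ri.P k' →ₗ[L] Rl.P 0),
      ((ε 0).comp (g (k' + 1 + 0)) = (Rl.d 0).comp (s 0) + s'.comp (Ri.d k')) ∧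
      (∀ t, ((ε (t + 1)).comp (g (k' + 1 + t + 1)) :
            Ri.P (k' + 1 + t + 1) →ₗ[L] Rl.P (t + 1)) =
        ((Rl.d (t + 1)).comp (s (t + 1)) : Ri.P (k' + 1 + t + 1) →ₗ[L] Rl.P (t + 1)) +
          (s t).comp (Ri.d (k' + 1 + t))) := by
  obtain ⟨v, hv⟩ := D.exists_aug_comp_eq hij (hB.2.2 j) Rj f'
  obtain ⟨h, hh⟩ := Ri.exists_homotopy_of_factors_aug Rj g hg_aug hg_chain hv
  exact ⟨fun t => (ε (t + 1)).comp (h (k' + 1 + t)), (ε 0).comp (h k'),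
    LinearMap.comp_eq_add_of_homotopy (hh k') (hε_chain 0),
    fun t => LinearMap.comp_eq_add_of_homotopy (hh (k' + 1 + t)) (hε_chain (t + 1))⟩

/-- Proposition 4.1 of the paper.
Let `B` and `A` be directed algebras (with `C = A^op`), `Λ = 𝒜(B, A^op)` the dual extension
algebra, `i, j, ℓ` pairwise distinct vertices and `k ≥ 1` (below `k = k' + 1`).  Then the
Yoneda multiplication
`m₂ : Ext^k_Λ(Δ_Λ(j), Δ_Λ(ℓ)) × Hom_Λ(Δ_Λ(i), Δ_Λ(j)) → Ext^k_Λ(Δ_Λ(i), Δ_Λ(ℓ))`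
is the zero map.  Concretely: the Yoneda product is computed via composition of chain maps
between minimal projective resolutions, so the claim is that for every homomorphism
`f' : Δ_Λ(i) → Δ_Λ(j)`, with chain-map lift `g` to the minimal resolutions, and every
chain map `ε` of degree `k` from the resolution of `Δ_Λ(j)` to that of `Δ_Λ(ℓ)`
(representing an arbitrary class of `Ext^k_Λ(Δ_Λ(j), Δ_Λ(ℓ))`), the composite chain map
`t ↦ ε t ∘ g (k + t)` is null-homotopic, i.e. represents `0` in
`Ext^k_Λ(Δ_Λ(i), Δ_Λ(ℓ))`. -/
theorem statement2
    (K : Type) [Field K] [IsAlgClosed K] (n : ℕ)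
    (B C L : Type) [Ring B] [Algebra K B] [Ring C] [Algebra K C] [Ring L] [Algebra K L]
    (dB : IdemData K n B) (dC : IdemData K n C)
    (hB : dB.Directed) (hC : dC.Codirected)
    (D : DualExt K n B C L dB dC)
    (dL : IdemData K n L) (hdL : ∀ i, dL.e i = D.ιB (dB.e i))
    (i j l : Fin n) (hij : i ≠ j) (hjl : j ≠ l) (hil : i ≠ l)
    (k' : ℕ)
    -- minimal projective resolutions of `Δ_Λ(i)`, `Δ_Λ(j)`, `Δ_Λ(ℓ)`
    (Ri : ProjRes K L (D.std i)) (hRi : Ri.Minimal dL)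
    (Rj : ProjRes K L (D.std j)) (hRj : Rj.Minimal dL)
    (Rl : ProjRes K L (D.std l)) (hRl : Rl.Minimal dL)
    -- a homomorphism `f' : Δ_Λ(i) → Δ_Λ(j)` together with a chain-map lift `g`
    (f' : D.std i →ₗ[L] D.std j)
    (g : ∀ t, Ri.P t →ₗ[L] Rj.P t)
    (hg_aug : Rj.aug.comp (g 0) = f'.comp Ri.aug)
    (hg_chain : ∀ t, (g t).comp (Ri.d t) = (Rj.d t).comp (g (t + 1)))
    -- a degree-`k = k' + 1` chain map `ε` representing a class of `Ext^k(Δ_Λ(j), Δ_Λ(ℓ))`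
    (ε : ∀ t, Rj.P (k' + 1 + t) →ₗ[L] Rl.P t)
    (hε_chain : ∀ t, (ε t).comp (Rj.d (k' + 1 + t)) = (Rl.d t).comp (ε (t + 1))) :
    -- the Yoneda product `[ε] ⋆ [f']` is zero: the composite chain map is null-homotopic
    ∃ (s : ∀ t, Ri.P (k' + 1 + t) →ₗ[L] Rl.P (t + 1)) (s' : Ri.P k' →ₗ[L] Rl.P 0),
      ((ε 0).comp (g (k' + 1 + 0)) = (Rl.d 0).comp (s 0) + s'.comp (Ri.d k')) ∧
      (∀ t, ((ε (t + 1)).comp (g (k' + 1 + t + 1)) :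
            Ri.P (k' + 1 + t + 1) →ₗ[L] Rl.P (t + 1)) =
        ((Rl.d (t + 1)).comp (s (t + 1)) : Ri.P (k' + 1 + t + 1) →ₗ[L] Rl.P (t + 1)) +
          (s t).comp (Ri.d (k' + 1 + t))) :=
  statement2_general K n B C L dB dC hB D i j l hij k' Ri Rj Rl f' g hg_aug hg_chain ε hε_chain
end
end

section
/- Let B and A be directed algebras and endow Λ = 𝒜(B, A^op) with the alternate grading (idempotents and arrows coming from A^op in degree 0, arrows coming from B in degree 1). If Λ is left standard Koszul, then the homological grading and the internal grading on Ext*_Λ(Δ, Δ) coincide. -/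
noncomputable section

universe u

/-- A grading of a `K`-algebra by `ℕ` (e.g. the path-length grading of a quotient of a
path algebra). -/
structure AlgGrading (K : Type u) [Field K] (B : Type u) [Ring B] [Algebra K B] where
  gr : ℕ → Submodule K B
  internal : DirectSum.IsInternal gr
  one_mem : (1 : B) ∈ gr 0
  mul_mem : ∀ {a b : ℕ} {x y : B}, x ∈ gr a → y ∈ gr b → x * y ∈ gr (a + b)

/-- A graded module `M` (over the graded ring `R`) is generated in degree `m` if
`R · M_m = M`.  Here `M` is realized as a left-submodule `P ⊆ R`, with grading induced from
the grading `g` of `R`; the condition says `P` is spanned over `R` by its degree-`m` part. -/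
def GenInDeg {K : Type u} [Field K] {R : Type u} [Ring R] [Algebra K R]
    (g : AlgGrading K R) (P : Submodule R R) (m : ℕ) : Prop :=
  (P : Set R) ⊆ (Submodule.span R ((g.gr m : Set R) ∩ (P : Set R)) : Set R)

noncomputable instance {K : Type u} [Field K] {R : Type u} [Ring R] [Algebra K R]
    {M : Type u} [AddCommGroup M] [Module R M] (Q : ProjRes K R M) (k : ℕ) :
    Module K (Q.P k) :=
  Module.compHom _ (algebraMap K R)

/-- A linear resolution of the graded module `M` (with grading `gM`) over the graded algebra
`(R, g)`: a projective resolution `⋯ → P 1 → P 0 → M` of graded modules (all maps of degree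
`0`) in which `P k` is generated in degree `k`. -/
structure LinRes (K : Type u) [Field K] (R : Type u) [Ring R] [Algebra K R]
    (g : AlgGrading K R) (M : Type u) [AddCommGroup M] [Module R M] [Module K M]
    (gM : ℕ → Submodule K M) where
  res : ProjRes K R M
  grP : ∀ k, ℕ → Submodule K (res.P k)
  internal : ∀ k, DirectSum.IsInternal (grP k)
  smul_mem : ∀ (k : ℕ) {a b : ℕ} {x : R} {m : res.P k},
    x ∈ g.gr a → m ∈ grP k b → x • m ∈ grP k (a + b)
  d_graded : ∀ (k a : ℕ), ∀ x ∈ grP (k + 1) a, res.d k x ∈ grP k a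
  aug_graded : ∀ a : ℕ, ∀ x ∈ grP 0 a, res.aug x ∈ gM a
  gen : ∀ k, Submodule.span R ((grP k k : Set (res.P k))) = ⊤

/-- A graded algebra `(R, g)` with idempotent data `d` is Koszul if every simple module
(concentrated in degree `0`) admits a linear resolution. -/
def IsKoszul {K : Type u} [Field K] {n : ℕ} {R : Type u} [Ring R] [Algebra K R]
    (d : IdemData K n R) (g : AlgGrading K R) : Prop :=
  ∀ (i : Fin n) (S : Type u) [AddCommGroup S] [Module R S] [Module K S]
    [IsScalarTower K R S], d.IsSimpleAt i S →
      Nonempty (LinRes K R g S (fun a => if a = 0 then (⊤ : Submodule K S) else ⊥))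

/-- The grading induced on the standard module `Δ_Λ(i)` (a quotient of the graded module
`P_Λ(i) = Λ e i`) by a grading of `Λ`. -/
noncomputable def stdGrading {K : Type u} [Field K] {n : ℕ} {B C L : Type u} [Ring B]
    [Algebra K B] [Ring C] [Algebra K C] [Ring L] [Algebra K L] {dB : IdemData K n B}
    {dC : IdemData K n C} (D : DualExt K n B C L dB dC) (gL : AlgGrading K L) (i : Fin n) :
    ℕ → Submodule K (D.std i) := fun a =>
  Submodule.map
    ((LinearMap.restrictScalars K (S := L) (M₂ := D.std i)
      ((((Submodule.span L {x : L | ∃ b, dB.IsRad b ∧ x = D.ιB b * D.ιB (dB.e i)}).comap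
        (leftIdeal (D.ιB (dB.e i))).subtype).mkQ) :
          ↥(leftIdeal (D.ιB (dB.e i))) →ₗ[L] D.std i)) :
          ↥(leftIdeal (D.ιB (dB.e i))) →ₗ[K] D.std i)
    ((gL.gr a).comap (LinearMap.restrictScalars K (leftIdeal (D.ιB (dB.e i))).subtype))

/-- `Λ` (graded) is left standard Koszul: every left standard module `Δ_Λ(i)` has a linear
resolution. -/
def LeftStandardKoszul {K : Type u} [Field K] {n : ℕ} {B C L : Type u} [Ring B]
    [Algebra K B] [Ring C] [Algebra K C] [Ring L] [Algebra K L] {dB : IdemData K n B}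
    {dC : IdemData K n C} (D : DualExt K n B C L dB dC) (gL : AlgGrading K L) : Prop :=
  ∀ i : Fin n, Nonempty (LinRes K L gL (D.std i) (stdGrading D gL i))

/-!
Under the alternate grading every arrow of `B` has positive degree and is radical, so the
positive part of `Λ` maps `Λ e_j` into `Λ (rad B) e_j` and hence annihilates `Δ(j)`; as
`Δ(j)` is generated by the degree-`0` element `e_j`, it is concentrated in degree `0`.
A linear resolution has `P^k` generated in degree `k`, so a homomorphism `P^k → Δ(j)` kills
every homogeneous component of degree `a ≠ k`: such a component is a sum of products `r • y`
with `y` of degree `k` and `r` of positive degree.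
-/

namespace DirectSum.IsInternal

variable {ι K M : Type*} [DecidableEq ι] [Semiring K] [AddCommMonoid M] [Module K M]
  {A : ι → Submodule K M}

def proj (h : IsInternal A) (a : ι) : M →ₗ[K] M :=
  (A a).subtype ∘ₗ DFinsupp.lapply a ∘ₗ
    (LinearEquiv.ofBijective (coeLinearMap A) h).symm.toLinearMap

theorem proj_of_mem (h : IsInternal A) (a : ι) {b : ι} {x : M} (hx : x ∈ A b) :
    h.proj a x = if b = a then x else 0 := by
  change ((LinearEquiv.ofBijective (coeLinearMap A) h).symm x a : M) = _
  by_cases hba : b = a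
  · subst hba
    rw [h.ofBijective_coeLinearMap_of_mem hx, if_pos rfl]
  · rw [h.ofBijective_coeLinearMap_of_mem_ne hba hx, if_neg hba, Submodule.coe_zero]

end DirectSum.IsInternal

namespace AlgGrading

variable {K R : Type u} [Field K] [Ring R] [Algebra K R] (g : AlgGrading K R)

@[elab_as_elim]
theorem induction_on {motive : R → Prop} (x : R) (mem : ∀ m, ∀ x ∈ g.gr m, motive x)
    (zero : motive 0) (add : ∀ x y, motive x → motive y → motive (x + y)) : motive x :=
  Submodule.iSup_induction (motive := motive) g.gr
    (g.internal.submodule_iSup_eq_top ▸ Submodule.mem_top) mem zero add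

def AnnihilatedByPos (M : Type*) [AddCommGroup M] [Module R M] : Prop :=
  ∀ m, m ≠ 0 → ∀ r ∈ g.gr m, ∀ v : M, r • v = 0

theorem map_eq_zero_of_mem_of_ne {M N : Type*} [AddCommGroup M] [Module R M] [Module K M]
    [AddCommGroup N] [Module R N] {gM : ℕ → Submodule K M} (hint : DirectSum.IsInternal gM)
    (hsmul : ∀ {a b : ℕ} {r : R} {y : M}, r ∈ g.gr a → y ∈ gM b → r • y ∈ gM (a + b))
    {k : ℕ} (hgen : Submodule.span R (gM k : Set M) = ⊤) (hN : g.AnnihilatedByPos N)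
    (φ : M →ₗ[R] N) {a : ℕ} (hak : a ≠ k) {x : M} (hx : x ∈ gM a) : φ x = 0 := by
  have key : ∀ y ∈ Submodule.span R (gM k : Set M), ∀ r : R, φ (hint.proj a (r • y)) = 0 := by
    intro y hy
    induction hy using Submodule.span_induction with
    | mem y hy =>
      intro r
      induction r using g.induction_on with
      | mem m r hr =>
        rw [hint.proj_of_mem a (hsmul hr hy)]
        split_ifs with hmk
        · rw [map_smul, hN m (by omega) r hr]
        · exact map_zero φ
      | zero => simp
      | add r s hr hs => rw [add_smul, map_add, map_add, hr, hs, add_zero]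
    | zero => simp
    | add y z _ _ hy hz => intro r; rw [smul_add, map_add, map_add, hy, hz, add_zero]
    | smul s y _ hy => intro r; rw [smul_smul]; exact hy _
  simpa [hint.proj_of_mem a hx] using key x (hgen ▸ Submodule.mem_top) 1

end AlgGrading

theorem IdemData.Directed.isRad_of_mem_gr {K B : Type u} [Field K] [Ring B] [Algebra K B]
    {n : ℕ} {d : IdemData K n B} (hd : d.Directed) {g : AlgGrading K B}
    (he : ∀ i, d.e i ∈ g.gr 0) {m : ℕ} (hm : m ≠ 0) {b : B} (hb : b ∈ g.gr m) : d.IsRad b := by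
  intro i
  obtain ⟨c, hc⟩ := hd.2.2 i b
  have hm' : c • d.e i ∈ g.gr m := by
    simpa [hc] using g.mul_mem (g.mul_mem (he i) hb) (he i)
  rw [hc]
  exact Submodule.disjoint_def.mp (g.internal.submodule_iSupIndep.pairwiseDisjoint hm) _ hm'
    ((g.gr 0).smul_mem c (he i))

namespace DualExt

variable {K : Type u} [Field K] {n : ℕ} {B C L : Type u} [Ring B] [Algebra K B]
  [Ring C] [Algebra K C] [Ring L] [Algebra K L] {dB : IdemData K n B} {dC : IdemData K n C}
  (D : DualExt K n B C L dB dC)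

/-- The left ideal `Λ (rad B) e_j`, whose intersection with `Λ e_j` is divided out in `Δ(j)`. -/
def stdRel (j : Fin n) : Submodule L L :=
  Submodule.span L {x : L | ∃ b, dB.IsRad b ∧ x = D.ιB b * D.ιB (dB.e j)}

theorem idem_mem_leftIdeal (j : Fin n) : D.ιB (dB.e j) ∈ leftIdeal (D.ιB (dB.e j)) := by
  show D.ιB (dB.e j) * D.ιB (dB.e j) = D.ιB (dB.e j)
  rw [← map_mul, dB.orth, if_pos rfl]

variable {gB : AlgGrading K B} {gL : AlgGrading K L} (hB : dB.Directed)
  (hgBe : ∀ i, dB.e i ∈ gB.gr 0)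
  (hgL : ∀ m₀ : ℕ, gL.gr m₀ = Submodule.span K {x : L |
      ∃ b : ℕ, b = m₀ ∧ ∃ c bb, bb ∈ gB.gr b ∧ x = D.ιC c * D.ιB bb})
include hB hgBe hgL

theorem mul_idem_mem_stdRel (j : Fin n) {m : ℕ} (hm : m ≠ 0) {x : L} (hx : x ∈ gL.gr m) :
    x * D.ιB (dB.e j) ∈ D.stdRel j := by
  rw [hgL m] at hx
  induction hx using Submodule.span_induction with
  | mem x hx =>
    obtain ⟨_, rfl, c, b, hb, rfl⟩ := hx
    have hbe : dB.IsRad (b * dB.e j) :=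
      hB.isRad_of_mem_gr hgBe hm (by simpa using gB.mul_mem hb (hgBe j))
    have hgen : D.ιB (b * dB.e j) ∈ D.stdRel j :=
      Submodule.subset_span ⟨_, hbe, by rw [← map_mul, mul_assoc, dB.orth, if_pos rfl]⟩
    rw [mul_assoc, ← map_mul]
    exact (D.stdRel j).smul_mem (D.ιC c) hgen
  | zero => simp
  | add x y _ _ hx hy => rw [add_mul]; exact add_mem hx hy
  | smul c x _ hx => rw [smul_mul_assoc]; exact (D.stdRel j).smul_of_tower_mem c hx

theorem std_annihilatedByPos (j : Fin n) : gL.AnnihilatedByPos (D.std j) := by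
  intro m hm l hl v
  obtain ⟨⟨z, hz⟩, rfl⟩ := Submodule.Quotient.mk_surjective _ v
  change Submodule.Quotient.mk (l • _) = 0
  rw [Submodule.Quotient.mk_eq_zero]
  show l * z ∈ D.stdRel j
  rw [← show l * z * D.ιB (dB.e j) = l * z by rw [mul_assoc, hz]]
  clear hz
  induction z using gL.induction_on with
  | mem d z hzd =>
    exact D.mul_idem_mem_stdRel hB hgBe hgL j (by omega) (gL.mul_mem hl hzd)
  | zero => simp
  | add x y hx hy => rw [mul_add, add_mul]; exact add_mem hx hy

theorem mem_stdGrading_zero (hgB : ∀ (a : ℕ) (x : B), x ∈ gB.gr a → D.ιB x ∈ gL.gr a)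
    (j : Fin n) (v : D.std j) : v ∈ stdGrading D gL j 0 := by
  obtain ⟨⟨z, hz⟩, rfl⟩ := Submodule.Quotient.mk_surjective _ v
  set gen : D.std j := Submodule.Quotient.mk ⟨_, D.idem_mem_leftIdeal j⟩
  have hv : (Submodule.Quotient.mk ⟨z, hz⟩ : D.std j) = z • gen := by
    change _ = Submodule.Quotient.mk (z • _)
    exact congrArg _ (Subtype.ext hz.symm)
  rw [hv]
  clear hv hz
  induction z using gL.induction_on with
  | mem d z hzd =>
    rcases eq_or_ne d 0 with rfl | hd
    · refine ⟨z • ⟨_, D.idem_mem_leftIdeal j⟩, ?_, rfl⟩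
      simpa using gL.mul_mem hzd (hgB 0 _ (hgBe j))
    · rw [D.std_annihilatedByPos hB hgBe hgL j d hd z hzd]
      exact zero_mem _
  | zero => rw [zero_smul]; exact zero_mem _
  | add x y hx hy => rw [add_smul]; exact add_mem hx hy

end DualExt

theorem statement7_general
    (K : Type) [Field K] (n : ℕ)
    (B C L : Type) [Ring B] [Algebra K B] [Ring C] [Algebra K C] [Ring L] [Algebra K L]
    (dB : IdemData K n B) (dC : IdemData K n C)
    (hB : dB.Directed)
    (D : DualExt K n B C L dB dC)
    -- the alternate grading `gL` on `Λ`; `gB` is the path-length grading of `B`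
    (gB : AlgGrading K B) (gL : AlgGrading K L)
    (hgBe : ∀ i, dB.e i ∈ gB.gr 0)
    (hgB : ∀ (a : ℕ) (x : B), x ∈ gB.gr a → D.ιB x ∈ gL.gr a)
    (hgL : ∀ m₀ : ℕ, gL.gr m₀ = Submodule.span K {x : L |
      ∃ b : ℕ, b = m₀ ∧ ∃ c bb, bb ∈ gB.gr b ∧ x = D.ιC c * D.ιB bb})
    (i j : Fin n) (k : ℕ)
    -- a minimal linear (graded) projective resolution of `Δ_Λ(i)`
    (LR : LinRes K L gL (D.std i) (stdGrading D gL i)) :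
    ∀ (φ : LR.res.P k →ₗ[L] D.std j) (a : ℕ) (x : LR.res.P k),
      x ∈ LR.grP k a → φ x ∈ stdGrading D gL j (a - k) := by
  intro φ a x hx
  rcases le_or_gt a k with hak | hka
  · rw [Nat.sub_eq_zero_of_le hak]
    exact D.mem_stdGrading_zero hB hgBe hgL hgB j (φ x)
  · rw [gL.map_eq_zero_of_mem_of_ne (LR.internal k) (LR.smul_mem k) (LR.gen k)
      (D.std_annihilatedByPos hB hgBe hgL j) φ hka.ne' hx]
    exact zero_mem _

/-- Lemma 5.6 of the paper.
Let `B` and `A` be directed algebras (with `C = A^op`) and endow `Λ = 𝒜(B, A^op)` with the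
*alternate* grading: idempotents and arrows coming from `A^op` in degree `0` (so the whole
image of `ιC` is in degree `0`), arrows coming from `B` in degree `1` (so `ιB` is graded,
for the path-length grading `gB` of `B`).  Suppose `Λ` is left standard Koszul for this
grading.  Then the homological and internal gradings on `Ext*_Λ(Δ, Δ)` coincide.
Concretely: by minimality of the resolutions, `Ext^k_Λ(Δ_Λ(i), Δ_Λ(j)) ≅ Hom_Λ(P^k, Δ_Λ(j))`
(cf. Statement 1), and the claim is that every such homomorphism `φ`, i.e. every element of
`Ext^k`, is homogeneous of internal degree `k`: it maps the internal-degree-`a` part of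
`P^k` into the internal-degree-`(a - k)` part of `Δ_Λ(j)`. -/
theorem statement7
    (K : Type) [Field K] [IsAlgClosed K] (n : ℕ)
    (B C L : Type) [Ring B] [Algebra K B] [Ring C] [Algebra K C] [Ring L] [Algebra K L]
    (dB : IdemData K n B) (dC : IdemData K n C)
    (hB : dB.Directed) (hC : dC.Codirected)
    (D : DualExt K n B C L dB dC)
    (dL : IdemData K n L) (hdL : ∀ i, dL.e i = D.ιB (dB.e i))
    -- the alternate grading `gL` on `Λ`; `gB` is the path-length grading of `B`
    (gB : AlgGrading K B) (gL : AlgGrading K L)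
    (hgBe : ∀ i, dB.e i ∈ gB.gr 0)
    (hgB : ∀ (a : ℕ) (x : B), x ∈ gB.gr a → D.ιB x ∈ gL.gr a)
    (hgC : ∀ c : C, D.ιC c ∈ gL.gr 0)
    (hgL : ∀ m₀ : ℕ, gL.gr m₀ = Submodule.span K {x : L |
      ∃ b : ℕ, b = m₀ ∧ ∃ c bb, bb ∈ gB.gr b ∧ x = D.ιC c * D.ιB bb})
    -- `Λ` is left standard Koszul (with respect to the alternate grading)
    (hLSK : LeftStandardKoszul D gL)
    (i j : Fin n) (k : ℕ)
    -- a minimal linear (graded) projective resolution of `Δ_Λ(i)`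
    (LR : LinRes K L gL (D.std i) (stdGrading D gL i)) (hmin : LR.res.Minimal dL) :
    ∀ (φ : LR.res.P k →ₗ[L] D.std j) (a : ℕ) (x : LR.res.P k),
      x ∈ LR.grP k a → φ x ∈ stdGrading D gL j (a - k) :=
  statement7_general K n B C L dB dC hB D gB gL hgBe hgB hgL i j k LR
end
end

section
/- Let B and A be directed algebras, Λ = 𝒜(B, A^op), let P• → 𝕃 be a minimal projective resolution of the direct sum 𝕃 of simple B-modules, and let D^B = End_B(P•) and D^Λ = End_Λ(F(P•)) with differentials ∂^B, ∂^Λ, where F = Λ ⊗_B −. Then for every f ∈ D^B: (i) F(∂^B(f)) = ∂^Λ(F(f)); (ii) ∂^B(f) = 0 if and only if ∂^Λ(F(f)) = 0; and (iii) f ∈ im ∂^B if and only if F(f) ∈ im ∂^Λ. -/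
noncomputable section

universe u

/-- A (ℤ-graded) dg-algebra of endomorphisms of a complex: the algebra `D` (modelling
`End(P•)` of a complex of projectives, whose elements are homogeneous graded endomorphisms,
not necessarily chain maps) with an internal grading, containing the differential of the
complex as a degree-one square-zero element `d`, and with the differential
`∂ f = d f − (−1)^{|f|} f d`. -/
structure DGA (K : Type u) [Field K] (D : Type u) [Ring D] [Algebra K D] where
  gr : ℤ → Submodule K D
  internal : DirectSum.IsInternal gr
  one_mem : (1 : D) ∈ gr 0
  mul_mem : ∀ {a b : ℤ} {x y : D}, x ∈ gr a → y ∈ gr b → x * y ∈ gr (a + b)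
  d : D
  d_mem : d ∈ gr 1
  d_sq : d * d = 0
  der : D →ₗ[K] D
  der_apply : ∀ (a : ℤ) (x : D), x ∈ gr a →
    der x = d * x - ((Int.negOnePow a : ℤ) • (x * d))

/-- Merkulov's construction (following Lu–Palmieri–Wu–Zhang; Section 6 of the paper):
a decomposition `D = H ⊕ im ∂ ⊕ L`, where `H` consists of cycles and realizes the homology
(`H ≅ Ext*`), together with the projection `p : D → H`, the homotopy `h` (zero on `H ⊕ L`,
`∂⁻¹` on `im ∂`), the inductively defined maps
`λ₂ = multiplication`, `λ_n = Σ_{r+s=n, s ≥ 1} (−1)^{s+1} λ₂(hλ_r ⊗ hλ_s)` (`hλ₁ = −id`),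
and the resulting `A∞`-multiplications `m_n = p ∘ λ_n ∘ i^{⊗n}` on `H ≅ Ext*`.
Tuples are written `(ε_n, …, ε_1)` with `v 0 = ε_1` the first map to be composed. -/
structure Merkulov (K : Type u) [Field K] (D : Type u) [Ring D] [Algebra K D]
    (E : DGA K D) where
  H : ℤ → Submodule K D
  L : ℤ → Submodule K D
  H_le : ∀ a, H a ≤ E.gr a
  L_le : ∀ a, L a ≤ E.gr a
  H_cycle : ∀ a, ∀ x ∈ H a, E.der x = 0
  L_reg : ∀ a, ∀ x ∈ L a, E.der x = 0 → x = 0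
  decomp : ∀ (a : ℤ), ∀ x ∈ E.gr a,
    ∃ xh ∈ H a, ∃ y ∈ L (a - 1), ∃ xl ∈ L a, x = xh + E.der y + xl
  indep : ∀ (a : ℤ), ∀ xh ∈ H a, ∀ y ∈ L (a - 1), ∀ xl ∈ L a,
    xh + E.der y + xl = 0 → xh = 0 ∧ E.der y = 0 ∧ xl = 0
  p : D →ₗ[K] D
  p_H : ∀ a, ∀ x ∈ H a, p x = x
  p_bdry : ∀ x : D, p (E.der x) = 0
  p_L : ∀ a, ∀ x ∈ L a, p x = 0
  h : D →ₗ[K] D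
  h_H : ∀ a, ∀ x ∈ H a, h x = 0
  h_L : ∀ a, ∀ x ∈ L a, h x = 0
  h_inv : ∀ a, ∀ x ∈ L a, h (E.der x) = x
  lam : ∀ k : ℕ, (Fin k → D) → D
  lam_two : ∀ v : Fin 2 → D, lam 2 v = v 1 * v 0
  lam_rec : ∀ k : ℕ, 3 ≤ k → ∀ v : Fin k → D, lam k v =
    ∑ s ∈ (Finset.Ioo 0 k).attach,
      ((-1 : ℤ) ^ ((s : ℕ) + 1)) •
        ((if (k - (s : ℕ)) = 1 then
            -(v ⟨(s : ℕ), by have := Finset.mem_Ioo.mp s.property; omega⟩)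
          else h (lam (k - (s : ℕ)) (fun i : Fin (k - (s : ℕ)) =>
            v ⟨(s : ℕ) + (i : ℕ), by
              have := Finset.mem_Ioo.mp s.property
              have := i.isLt
              omega⟩))) *
         (if (s : ℕ) = 1 then
            -(v ⟨0, by have := Finset.mem_Ioo.mp s.property; omega⟩)
          else h (lam (s : ℕ) (fun i : Fin (s : ℕ) =>
            v ⟨(i : ℕ), by
              have := Finset.mem_Ioo.mp s.property
              have := i.isLt
              omega⟩))))
  m : ∀ k : ℕ, (Fin k → D) → D
  m_def : ∀ (k : ℕ) (v : Fin k → D), m k v = p (lam k v)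

namespace DGA

variable {K : Type u} [Field K] {D D' : Type u} [Ring D] [Algebra K D] [Ring D'] [Algebra K D']

theorem gr_induction (E : DGA K D) {C : D → Prop} (x : D)
    (hp : ∀ (a : ℤ), ∀ y ∈ E.gr a, C y) (h0 : C 0)
    (hadd : ∀ y z, C y → C z → C (y + z)) : C x :=
  Submodule.iSup_induction (motive := C) E.gr
    (E.internal.submodule_iSup_eq_top ▸ Submodule.mem_top) hp h0 hadd

theorem inv_mem_gr_zero (E : DGA K D) {u : Dˣ} (hu : (u : D) ∈ E.gr 0) :
    (↑u⁻¹ : D) ∈ E.gr 0 := by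
  let _ : GradedRing E.gr :=
    { E.internal.chooseDecomposition with
      one_mem := E.one_mem
      mul_mem := fun _ _ _ _ => E.mul_mem }
  -- the degree-zero part `v₀` of `v = u⁻¹` satisfies `u * v₀ = (u * v)₀ = 1`, so `v₀ = v`
  have hright : (u : D) * DirectSum.decompose E.gr (↑u⁻¹ : D) 0 = 1 := by
    rw [← DirectSum.coe_decompose_mul_of_left_mem_zero E.gr hu, Units.mul_inv,
      DirectSum.decompose_of_mem_same E.gr E.one_mem]
  have hv : (↑u⁻¹ : D) = DirectSum.decompose E.gr (↑u⁻¹ : D) 0 := by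
    rw [← one_mul (DirectSum.decompose E.gr (↑u⁻¹ : D) 0 : D), ← Units.inv_mul u, mul_assoc,
      hright, mul_one]
  exact hv ▸ SetLike.coe_mem _

theorem conj_mem_gr (E : DGA K D) {u : Dˣ} (hu : (u : D) ∈ E.gr 0) {a : ℤ} {x : D}
    (hx : x ∈ E.gr a) : (u : D) * x * ↑u⁻¹ ∈ E.gr a := by
  simpa using E.mul_mem (E.mul_mem hu hx) (E.inv_mem_gr_zero hu)

def IsHom (E : DGA K D) (E' : DGA K D') (φ : D →ₐ[K] D') : Prop :=
  (∀ (a : ℤ) (x : D), x ∈ E.gr a → φ x ∈ E'.gr a) ∧ φ E.d = E'.d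

namespace IsHom

variable {E : DGA K D} {E' : DGA K D'} {φ : D →ₐ[K] D'}

theorem map_der (hφ : E.IsHom E' φ) (x : D) : φ (E.der x) = E'.der (φ x) := by
  induction x using E.gr_induction with
  | hp a y hy =>
    rw [E.der_apply a y hy, E'.der_apply a (φ y) (hφ.1 a y hy), map_sub, map_mul, map_zsmul,
      map_mul, hφ.2]
  | h0 => simp
  | hadd y z hy hz => rw [map_add, map_add, map_add, hy, hz, map_add]

theorem der_eq_zero_iff (hφ : E.IsHom E' φ) (hinj : Function.Injective φ) (x : D) :
    E.der x = 0 ↔ E'.der (φ x) = 0 := by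
  rw [← hφ.map_der, map_eq_zero_iff φ hinj]

theorem mem_range_der_iff (hφ : E.IsHom E' φ) {χ : D' →ₐ[K] D} (hχ : E'.IsHom E χ)
    (hχφ : ∀ x, χ (φ x) = x) (x : D) :
    x ∈ LinearMap.range E.der ↔ φ x ∈ LinearMap.range E'.der := by
  constructor
  · rintro ⟨y, rfl⟩
    exact ⟨φ y, (hφ.map_der y).symm⟩
  · rintro ⟨y, hy⟩
    exact ⟨χ y, by rw [← hχ.map_der, hy, hχφ]⟩

end IsHom

end DGA

def Units.conjAlgHom (R : Type*) [CommSemiring R] {A : Type*} [Semiring A] [Algebra R A]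
    (u : Aˣ) : A →ₐ[R] A :=
  (MulSemiringAction.toAlgEquiv R A (ConjAct.toConjAct u)).toAlgHom

theorem Units.conjAlgHom_apply (R : Type*) [CommSemiring R] {A : Type*} [Semiring A]
    [Algebra R A] (u : Aˣ) (x : A) : Units.conjAlgHom R u x = u * x * ↑u⁻¹ := by
  simp [Units.conjAlgHom, MulSemiringAction.toAlgEquiv, ConjAct.units_smul_def]

theorem statement9_general
    (K : Type) [Field K]
    -- the dg endomorphism algebras `D^B = End_B(P•)` and `D^Λ = End_Λ(F(P•))`
    (DB DL : Type) [Ring DB] [Algebra K DB] [Ring DL] [Algebra K DL]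
    (EB : DGA K DB) (EL : DGA K DL)
    -- the map induced by the exact functor `F = Λ ⊗_B −`, `f ↦ id_Λ ⊗ f`
    (F : DB →ₐ[K] DL) (hFinj : Function.Injective F)
    (hFgr : ∀ (a : ℤ) (x : DB), x ∈ EB.gr a → F x ∈ EL.gr a)
    (hFd : F EB.d = EL.d)
    -- the map induced by `G = B ⊗_Λ −`, with `G ∘ F ≅ Id_{B-mod}` realized by conjugation
    -- with an invertible degree-zero element `ψ`
    (G : DL →ₐ[K] DB) (hGgr : ∀ (a : ℤ) (x : DL), x ∈ EL.gr a → G x ∈ EB.gr a)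
    (ψ : DBˣ) (hψ : (ψ : DB) ∈ EB.gr 0)
    (hGF : ∀ f : DB, G (F f) = (↑ψ⁻¹ : DB) * f * ψ) :
    ∀ f : DB,
      (F (EB.der f) = EL.der (F f)) ∧
      (EB.der f = 0 ↔ EL.der (F f) = 0) ∧
      (f ∈ LinearMap.range EB.der ↔ F f ∈ LinearMap.range EL.der) := by
  intro f
  have hF : EB.IsHom EL F := ⟨hFgr, hFd⟩
  -- conjugating `G` by `ψ` turns `G ∘ F ≅ Id` into an actual left inverse of `F`
  let G' : DL →ₐ[K] DB := (Units.conjAlgHom K ψ).comp G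
  have hG'F : ∀ x, G' (F x) = x := fun x => by
    rw [AlgHom.comp_apply, Units.conjAlgHom_apply, hGF, ← mul_assoc, ← mul_assoc, Units.mul_inv,
      one_mul, mul_assoc, Units.mul_inv, mul_one]
  have hG' : EL.IsHom EB G' := ⟨fun a x hx => by
    simpa only [G', AlgHom.comp_apply, Units.conjAlgHom_apply]
      using EB.conj_mem_gr hψ (hGgr a x hx), hFd ▸ hG'F EB.d⟩
  exact ⟨hF.map_der f, hF.der_eq_zero_iff hFinj f, hF.mem_range_der_iff hG' hG'F f⟩

/-- Lemma 6.4 of the paper.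
Let `B` and `A` be directed algebras, `Λ = 𝒜(B, A^op)`, `P• → 𝕃` a minimal projective
resolution of the sum of the simple `B`-modules, `D^B = End_B(P•)` and
`D^Λ = End_Λ(F(P•))` the dg-algebras of graded endomorphisms with differentials
`∂(f) = d f − (−1)^{|f|} f d`, where `F = Λ ⊗_B −`.  These are modelled here by the abstract
dg-endomorphism-algebra data `EB`, `EΛ`; the functor `F` induces an injective algebra
homomorphism `f ↦ id_Λ ⊗ f` preserving degrees and sending the differential `d` of `P•` to
that of `F(P•)`, and the natural isomorphism `G ∘ F ≅ Id` (for `G = B ⊗_Λ −`) yields an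
algebra homomorphism `G : D^Λ → D^B` with `G(F(f)) = ψ⁻¹ f ψ` for an invertible degree-zero
element `ψ`.  Then for every `f ∈ D^B`:
(i)   `F(∂^B f) = ∂^Λ(F f)`;
(ii)  `∂^B f = 0` if and only if `∂^Λ(F f) = 0`;
(iii) `f ∈ im ∂^B` if and only if `F f ∈ im ∂^Λ`. -/
theorem statement9
    (K : Type) [Field K] [IsAlgClosed K] (n : ℕ)
    (B C L : Type) [Ring B] [Algebra K B] [Ring C] [Algebra K C] [Ring L] [Algebra K L]
    (dB : IdemData K n B) (dC : IdemData K n C)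
    (hB : dB.Directed) (hC : dC.Codirected)
    (DEx : DualExt K n B C L dB dC)
    -- the dg endomorphism algebras `D^B = End_B(P•)` and `D^Λ = End_Λ(F(P•))`
    (DB DL : Type) [Ring DB] [Algebra K DB] [Ring DL] [Algebra K DL]
    (EB : DGA K DB) (EL : DGA K DL)
    -- the map induced by the exact functor `F = Λ ⊗_B −`, `f ↦ id_Λ ⊗ f`
    (F : DB →ₐ[K] DL) (hFinj : Function.Injective F)
    (hFgr : ∀ (a : ℤ) (x : DB), x ∈ EB.gr a → F x ∈ EL.gr a)
    (hFd : F EB.d = EL.d)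
    -- the map induced by `G = B ⊗_Λ −`, with `G ∘ F ≅ Id_{B-mod}` realized by conjugation
    -- with an invertible degree-zero element `ψ`
    (G : DL →ₐ[K] DB) (hGgr : ∀ (a : ℤ) (x : DL), x ∈ EL.gr a → G x ∈ EB.gr a)
    (ψ : DBˣ) (hψ : (ψ : DB) ∈ EB.gr 0)
    (hGF : ∀ f : DB, G (F f) = (↑ψ⁻¹ : DB) * f * ψ) :
    ∀ f : DB,
      (F (EB.der f) = EL.der (F f)) ∧
      (EB.der f = 0 ↔ EL.der (F f) = 0) ∧
      (f ∈ LinearMap.range EB.der ↔ F f ∈ LinearMap.range EL.der) :=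
  statement9_general K DB DL EB EL F hFinj hFgr hFd G hGgr ψ hψ hGF
end
end

section
/- In the setting of the compatible decompositions D^B = H^B ⊕ im ∂^B ⊕ L^B and D^Λ = H^Λ ⊕ im ∂^Λ ⊕ L^Λ with H^Λ = F(H^B) ⊕ Ĥ and L^Λ = F(L^B) ⊕ L̂, the isomorphism i^Λ : H^Λ → Ext*_Λ(Δ,Δ) can be chosen so that the projections p^B : D^B → Ext*_B(𝕃,𝕃) and p^Λ : D^Λ → Ext*_Λ(Δ,Δ) satisfy F(p^B(f)) = p^Λ(F(f)) for all f ∈ D^B. -/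
noncomputable section

universe u

/-- The decomposition `D = H ⊕ im ∂ ⊕ L` underlying Merkulov's construction:
`H` and `L` are graded subspaces, `H` consists of cycles (and realizes the homology of
`(D, ∂)`, i.e. `H ≅ Ext*`), `∂` is injective on `L`, and every homogeneous element
decomposes uniquely as `(element of H) + ∂(element of L) + (element of L)`. -/
structure IsMerkDecomp {K : Type u} [Field K] {D : Type u} [Ring D] [Algebra K D]
    (E : DGA K D) (H L : ℤ → Submodule K D) : Prop where
  H_le : ∀ a, H a ≤ E.gr a
  L_le : ∀ a, L a ≤ E.gr a
  H_cycle : ∀ a, ∀ x ∈ H a, E.der x = 0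
  L_reg : ∀ a, ∀ x ∈ L a, E.der x = 0 → x = 0
  decomp : ∀ (a : ℤ), ∀ x ∈ E.gr a,
    ∃ xh ∈ H a, ∃ y ∈ L (a - 1), ∃ xl ∈ L a, x = xh + E.der y + xl
  indep : ∀ (a : ℤ), ∀ xh ∈ H a, ∀ y ∈ L (a - 1), ∀ xl ∈ L a,
    xh + E.der y + xl = 0 → xh = 0 ∧ E.der y = 0 ∧ xl = 0

/-!
`F` commutes with the differentials, and maps `H^B`, `L^B` into `H^Λ`, `L^Λ`; hence it carries
the decomposition `x = x_H + ∂y + x_L` of an element of `D^B` to such a decomposition of `F x`,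
so `p^Λ ∘ F = F ∘ p^B`. The resulting embedding `F : H^B → H^Λ` and the embedding
`Ext*_B → Ext*_Λ` are two injections of `Ext*_B` into spaces of the same finite dimension, so an
arbitrary `i^Λ` can be corrected to an isomorphism intertwining them.
-/

theorem LinearEquiv.exists_apply_eq_of_injective {K V W X : Type*} [Field K]
    [AddCommGroup V] [Module K V] [AddCommGroup W] [Module K W]
    [AddCommGroup X] [Module K X] [FiniteDimensional K V] [FiniteDimensional K W]
    (hVW : Module.finrank K V = Module.finrank K W)
    (f : X →ₗ[K] V) (g : X →ₗ[K] W) (hf : Function.Injective f) (hg : Function.Injective g) :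
    ∃ φ : V ≃ₗ[K] W, ∀ x, φ (f x) = g x := by
  obtain ⟨S, hS⟩ := (LinearMap.range f).exists_isCompl
  obtain ⟨T, hT⟩ := (LinearMap.range g).exists_isCompl
  let eF := LinearEquiv.ofInjective f hf
  let eG := LinearEquiv.ofInjective g hg
  have hST : Module.finrank K S = Module.finrank K T := by
    have := Submodule.finrank_add_eq_of_isCompl hS
    have := Submodule.finrank_add_eq_of_isCompl hT
    have := (eF.symm.trans eG).finrank_eq
    omega
  obtain ⟨eST⟩ := FiniteDimensional.nonempty_linearEquiv_of_finrank_eq hST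
  refine ⟨((Submodule.prodEquivOfIsCompl _ _ hS).symm.trans
      ((eF.symm.trans eG).prodCongr eST)).trans (Submodule.prodEquivOfIsCompl _ _ hT), fun x => ?_⟩
  have hfx : (Submodule.prodEquivOfIsCompl _ _ hS).symm (f x) = (eF x, 0) :=
    Submodule.prodEquivOfIsCompl_symm_apply_left _ _ hS (eF x)
  simp [hfx, eG]

namespace DGA

variable {K : Type u} [Field K] {D D' M : Type u} [Ring D] [Algebra K D] [Ring D'] [Algebra K D']
  [AddCommGroup M] [Module K M]

theorem linearMap_ext (E : DGA K D) {f g : D →ₗ[K] M} (h : ∀ a, ∀ x ∈ E.gr a, f x = g x) :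
    f = g := by
  refine LinearMap.ext_on (s := ⋃ a, (E.gr a : Set D)) ?_ fun x hx => ?_
  · rw [← Submodule.iSup_eq_span, E.internal.submodule_iSup_eq_top]
  · obtain ⟨a, hx⟩ := Set.mem_iUnion.mp hx
    exact h a x hx

theorem map_der_of_mem (E : DGA K D) (E' : DGA K D') (F : D →ₐ[K] D')
    (hFgr : ∀ (a : ℤ) (x : D), x ∈ E.gr a → F x ∈ E'.gr a) (hFd : F E.d = E'.d)
    {a : ℤ} {x : D} (hx : x ∈ E.gr a) : F (E.der x) = E'.der (F x) := by
  rw [E.der_apply a x hx, E'.der_apply a (F x) (hFgr a x hx)]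
  simp only [map_sub, map_mul, map_zsmul, hFd]

end DGA

namespace Merkulov

variable {K : Type u} [Field K] {D D' : Type u} [Ring D] [Algebra K D] [Ring D'] [Algebra K D']
  {E : DGA K D} {E' : DGA K D'}

theorem p_add_der_add (M : Merkulov K D E) {a b : ℤ} {xh xl : D} (hxh : xh ∈ M.H a)
    (hxl : xl ∈ M.L b) (y : D) : M.p (xh + E.der y + xl) = xh := by
  rw [map_add, map_add, M.p_H a xh hxh, M.p_bdry y, M.p_L b xl hxl, add_zero, add_zero]

theorem p_comp_eq_comp_p (M : Merkulov K D E) (M' : Merkulov K D' E') (F : D →ₐ[K] D')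
    (hFgr : ∀ (a : ℤ) (x : D), x ∈ E.gr a → F x ∈ E'.gr a) (hFd : F E.d = E'.d)
    (hH : ∀ a, (M.H a).map F.toLinearMap ≤ M'.H a)
    (hL : ∀ a, (M.L a).map F.toLinearMap ≤ M'.L a) :
    M'.p ∘ₗ F.toLinearMap = F.toLinearMap ∘ₗ M.p := by
  refine E.linearMap_ext fun a x hx => ?_
  obtain ⟨xh, hxh, y, hy, xl, hxl, rfl⟩ := M.decomp a x hx
  have hFxh : F xh ∈ M'.H a := hH a (Submodule.mem_map_of_mem hxh)
  have hFxl : F xl ∈ M'.L a := hL a (Submodule.mem_map_of_mem hxl)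
  have hFy : F (E.der y) = E'.der (F y) :=
    DGA.map_der_of_mem E E' F hFgr hFd (M.L_le (a - 1) hy)
  rw [LinearMap.comp_apply, LinearMap.comp_apply, AlgHom.toLinearMap_apply,
    AlgHom.toLinearMap_apply, M.p_add_der_add hxh hxl y, map_add F, map_add F, hFy,
    M'.p_add_der_add hFxh hFxl]

end Merkulov

theorem statement11_general
    (K : Type) [Field K]
    (DB DL : Type) [Ring DB] [Algebra K DB] [Ring DL] [Algebra K DL]
    [FiniteDimensional K DL]
    (EB : DGA K DB) (EL : DGA K DL)
    (F : DB →ₐ[K] DL) (hFinj : Function.Injective F)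
    (hFgr : ∀ (a : ℤ) (x : DB), x ∈ EB.gr a → F x ∈ EL.gr a)
    (hFd : F EB.d = EL.d)
    -- Merkulov data with the compatible decompositions of Statement 10
    (MB : Merkulov K DB EB) (ML : Merkulov K DL EL)
    (Hhat Lhat : ℤ → Submodule K DL)
    (hH : ∀ a, ML.H a = (MB.H a).map F.toLinearMap ⊔ Hhat a)
    (hL : ∀ a, ML.L a = (MB.L a).map F.toLinearMap ⊔ Lhat a)
    -- the `Ext`-algebras as abstract vector spaces, `i^B` and the embedding `FX`
    (XB XL : Type) [AddCommGroup XB] [Module K XB] [AddCommGroup XL] [Module K XL]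
    (iB : XB ≃ₗ[K] ↥(⨆ a, MB.H a))
    (hXL : Nonempty (XL ≃ₗ[K] ↥(⨆ a, ML.H a)))
    (FX : XB →ₗ[K] XL) (hFXinj : Function.Injective FX) :
    ∃ iL : XL ≃ₗ[K] ↥(⨆ a, ML.H a),
      ∀ (f : DB) (hf : MB.p f ∈ ⨆ a, MB.H a) (hg : ML.p (F f) ∈ ⨆ a, ML.H a),
        iL.symm ⟨ML.p (F f), hg⟩ = FX (iB.symm ⟨MB.p f, hf⟩) := by
  have hHle : ∀ a, (MB.H a).map F.toLinearMap ≤ ML.H a := fun a => (hH a).symm ▸ le_sup_left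
  have hLle : ∀ a, (MB.L a).map F.toLinearMap ≤ ML.L a := fun a => (hL a).symm ▸ le_sup_left
  have hpF := MB.p_comp_eq_comp_p ML F hFgr hFd hHle hLle
  have hFH : ∀ x ∈ ⨆ a, MB.H a, F.toLinearMap x ∈ ⨆ a, ML.H a := fun x hx =>
    ((Submodule.map_iSup _ _).trans_le (iSup_mono hHle)) (Submodule.mem_map_of_mem hx)
  let j := F.toLinearMap.restrict hFH ∘ₗ iB.toLinearMap
  have hj : Function.Injective j := fun u v huv =>
    iB.injective (Subtype.ext (hFinj (congrArg Subtype.val huv)))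
  obtain ⟨eXL⟩ := hXL
  have : FiniteDimensional K XL := Module.Finite.equiv eXL.symm
  obtain ⟨iL, hiL⟩ := LinearEquiv.exists_apply_eq_of_injective eXL.finrank_eq FX j hFXinj hj
  refine ⟨iL, fun f hf hg => iL.symm_apply_eq.mpr ?_⟩
  rw [hiL]
  exact Subtype.ext ((LinearMap.congr_fun hpF f).trans (by simp [j]))

/-- Corollary 6.6 of the paper.
In the setting of the compatible decompositions
`D^B = H^B ⊕ im ∂^B ⊕ L^B` and `D^Λ = H^Λ ⊕ im ∂^Λ ⊕ L^Λ` with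
`H^Λ = F(H^B) ⊕ Ĥ` and `L^Λ = F(L^B) ⊕ L̂` (Statement 10), the isomorphism
`i^Λ : Ext*_Λ(Δ,Δ) ≅ H^Λ` can be chosen so that the projections
`p^B : D^B → Ext*_B(𝕃,𝕃)` and `p^Λ : D^Λ → Ext*_Λ(Δ,Δ)` (each being the projection onto
`H` composed with `i⁻¹`) satisfy `F(p^B(f)) = p^Λ(F(f))` for all `f ∈ D^B`, where on the
left `F` denotes the induced embedding `Ext*_B(𝕃,𝕃) → Ext*_Λ(Δ,Δ)` (called `FX` below). -/
theorem statement11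
    (K : Type) [Field K] [IsAlgClosed K] (n : ℕ)
    (B C L : Type) [Ring B] [Algebra K B] [Ring C] [Algebra K C] [Ring L] [Algebra K L]
    (dB : IdemData K n B) (dC : IdemData K n C)
    (hB : dB.Directed) (hC : dC.Codirected)
    (DEx : DualExt K n B C L dB dC)
    (DB DL : Type) [Ring DB] [Algebra K DB] [Ring DL] [Algebra K DL]
    [FiniteDimensional K DB] [FiniteDimensional K DL]
    (EB : DGA K DB) (EL : DGA K DL)
    (F : DB →ₐ[K] DL) (hFinj : Function.Injective F)
    (hFgr : ∀ (a : ℤ) (x : DB), x ∈ EB.gr a → F x ∈ EL.gr a)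
    (hFd : F EB.d = EL.d)
    -- Merkulov data with the compatible decompositions of Statement 10
    (MB : Merkulov K DB EB) (ML : Merkulov K DL EL)
    (Hhat Lhat : ℤ → Submodule K DL)
    (hH : ∀ a, ML.H a = (MB.H a).map F.toLinearMap ⊔ Hhat a)
    (hL : ∀ a, ML.L a = (MB.L a).map F.toLinearMap ⊔ Lhat a)
    -- the `Ext`-algebras as abstract vector spaces, `i^B` and the embedding `FX`
    (XB XL : Type) [AddCommGroup XB] [Module K XB] [AddCommGroup XL] [Module K XL]
    (iB : XB ≃ₗ[K] ↥(⨆ a, MB.H a))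
    (hXL : Nonempty (XL ≃ₗ[K] ↥(⨆ a, ML.H a)))
    (FX : XB →ₗ[K] XL) (hFXinj : Function.Injective FX) :
    ∃ iL : XL ≃ₗ[K] ↥(⨆ a, ML.H a),
      ∀ (f : DB) (hf : MB.p f ∈ ⨆ a, MB.H a) (hg : ML.p (F f) ∈ ⨆ a, ML.H a),
        iL.symm ⟨ML.p (F f), hg⟩ = FX (iB.symm ⟨MB.p f, hf⟩) :=
  statement11_general K DB DL EB EL F hFinj hFgr hFd MB ML Hhat Lhat hH hL XB XL iB hXL FX hFXinj
end
end

section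
/- Let B and A be directed algebras, Λ = 𝒜(B, A^op), and let {m_n^B} and {m_n^Λ} be the A∞-structures on Ext*_B(𝕃,𝕃) and Ext*_Λ(Δ,Δ) obtained from Merkulov's construction using compatible decompositions of D^B and D^Λ. Then for every n ≥ 2 and all ε_1,…,ε_n ∈ Ext*_B(𝕃,𝕃): F(m_n^B(ε_1,…,ε_n)) = m_n^Λ(F(ε_1),…,F(ε_n)). -/
noncomputable section

universe u

/-! The maps `λ_n` are built from multiplication, signs and the homotopy `h` alone, so a ring
homomorphism intertwining the two homotopies intertwines all `λ_n` (by strong induction on `n`);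
intertwining the projections as well, it then intertwines `m_n = p ∘ λ_n`. -/

namespace Merkulov

variable {K : Type u} [Field K] {D D' : Type u} [Ring D] [Algebra K D] [Ring D'] [Algebra K D']
  {E : DGA K D} {E' : DGA K D'} {G : Type*} [FunLike G D D'] [RingHomClass G D D']

theorem map_lam (M : Merkulov K D E) (M' : Merkulov K D' E') (F : G)
    (hFh : ∀ f, F (M.h f) = M'.h (F f)) (k : ℕ) (hk : 2 ≤ k) (v : Fin k → D) :
    F (M.lam k v) = M'.lam k (fun i => F (v i)) := by
  induction k using Nat.strong_induction_on with
  | _ k ih =>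
    rcases hk.eq_or_lt with rfl | hk
    · rw [M.lam_two, M'.lam_two, map_mul]
    · rw [M.lam_rec k hk v, M'.lam_rec k hk, map_sum]
      refine Finset.sum_congr rfl fun s _ => ?_
      have hs := Finset.mem_Ioo.mp s.property
      rw [map_zsmul, map_mul]
      congr 2
      · split_ifs
        · rw [map_neg]
        · rw [hFh, ih _ (by omega) (by omega)]
      · split_ifs
        · rw [map_neg]
        · rw [hFh, ih _ hs.2 (by omega)]

theorem map_m (M : Merkulov K D E) (M' : Merkulov K D' E') (F : G)
    (hFp : ∀ f, F (M.p f) = M'.p (F f)) (hFh : ∀ f, F (M.h f) = M'.h (F f))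
    (k : ℕ) (hk : 2 ≤ k) (v : Fin k → D) :
    F (M.m k v) = M'.m k (fun i => F (v i)) := by
  rw [M.m_def, M'.m_def, hFp, map_lam M M' F hFh k hk v]

end Merkulov

theorem statement13_general
    (K : Type) [Field K]
    (DB DL : Type) [Ring DB] [Algebra K DB] [Ring DL] [Algebra K DL]
    (EB : DGA K DB) (EL : DGA K DL)
    (F : DB →ₐ[K] DL)
    -- Merkulov data coming from compatible decompositions:
    (MB : Merkulov K DB EB) (ML : Merkulov K DL EL)
    (hFp : ∀ f : DB, F (MB.p f) = ML.p (F f))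
    (hFh : ∀ f : DB, F (MB.h f) = ML.h (F f)) :
    ∀ (k : ℕ), 2 ≤ k → ∀ v : Fin k → DB, (∀ i, ∃ a : ℤ, v i ∈ MB.H a) →
      F (MB.m k v) = ML.m k (fun i => F (v i)) :=
  fun k hk v _ => MB.map_m ML F hFp hFh k hk v

/-- Proposition 6.8 of the paper.
Let `B` and `A` be directed algebras, `Λ = 𝒜(B, A^op)`, and let `{m_n^B}` and `{m_n^Λ}` be
the `A∞`-structures on `Ext*_B(𝕃,𝕃)` and `Ext*_Λ(Δ,Δ)` obtained from Merkulov's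
construction using compatible decompositions of `D^B = End_B(P•)` and `D^Λ = End_Λ(F(P•))`
(so that `F p^B = p^Λ F` and `F h^B = h^Λ F`).  Identifying `Ext*` with the subspace `H` of
the decomposition (via which `m_n = p ∘ λ_n ∘ i^{⊗n}`), the claim is: for every `n ≥ 2` and
all `ε_1, …, ε_n ∈ Ext*_B(𝕃,𝕃)` (i.e. homogeneous elements of `H^B`),
`F(m_n^B(ε_1, …, ε_n)) = m_n^Λ(F(ε_1), …, F(ε_n))`. -/
theorem statement13
    (K : Type) [Field K] [IsAlgClosed K] (n : ℕ)
    (B C L : Type) [Ring B] [Algebra K B] [Ring C] [Algebra K C] [Ring L] [Algebra K L]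
    (dB : IdemData K n B) (dC : IdemData K n C)
    (hB : dB.Directed) (hC : dC.Codirected)
    (DEx : DualExt K n B C L dB dC)
    (DB DL : Type) [Ring DB] [Algebra K DB] [Ring DL] [Algebra K DL]
    (EB : DGA K DB) (EL : DGA K DL)
    (F : DB →ₐ[K] DL) (hFinj : Function.Injective F)
    (hFgr : ∀ (a : ℤ) (x : DB), x ∈ EB.gr a → F x ∈ EL.gr a)
    (hFd : F EB.d = EL.d)
    -- Merkulov data coming from compatible decompositions:
    (MB : Merkulov K DB EB) (ML : Merkulov K DL EL)
    (hFH : ∀ a, (MB.H a).map F.toLinearMap ≤ ML.H a)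
    (hFL : ∀ a, (MB.L a).map F.toLinearMap ≤ ML.L a)
    (hFp : ∀ f : DB, F (MB.p f) = ML.p (F f))
    (hFh : ∀ f : DB, F (MB.h f) = ML.h (F f)) :
    ∀ (k : ℕ), 2 ≤ k → ∀ v : Fin k → DB, (∀ i, ∃ a : ℤ, v i ∈ MB.H a) →
      F (MB.m k v) = ML.m k (fun i => F (v i)) :=
  statement13_general K DB DL EB EL F MB ML hFp hFh
end
end
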